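/- Compatible function approximation for the state-option transition path manifold. If φ̃ ∈ ℝⁿ is a critical point of the squared error φ ↦ ε(φ) (i.e., the gradient of ε vanishes at φ̃), then G_ϑ φ̃ = w, where w_i = ∑_{s',o} μ(s',o) a_O(s',o) ∂_i β(o,s',ϑ). In particular, if G_ϑ is invertible, then −φ̃ = G_ϑ^{-1} · (−w); that is, since the termination gradient of the expected discounted return is −∑_{s',o} μ(s',o) ∂β(o,s',ϑ)/∂ϑ · a_O(s',o), the negative of the minimizing weight vector equals the natural gradient with respect to the termination parameters. -/

import Mathlib

/-- Partial derivative of `f : ℝⁿ → ℝ` with respect to the `i`-th coordinate of `ϑ`. -/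
noncomputable def pd {n : ℕ} (i : Fin n) (f : (Fin n → ℝ) → ℝ) (ϑ : Fin n → ℝ) : ℝ :=
  fderiv ℝ f ϑ (Pi.single i 1)

/-!
At a critical point `φ̃` of `ε` the normal equations
`∑ μ L (h_φ̃ - a') ∂ₖ ln β' = 0` hold. The likelihood ratio `L` is exactly the factor with
`L ∂ₖ ln β' = -∂ₖ ln β`, and `a' = -β a_O`, so the normal equations become
`∑ μ ∂ₖ ln β · h_φ̃ = -∑ μ a_O ∂ₖ β`. Since `h_φ̃ = ⟨φ̃, ∇ ln β'⟩`, the left side is `-(G_ϑ φ̃)ₖ`.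
-/

open Matrix

section WeightedLeastSquares

variable {ι : Type*} [Fintype ι]

theorem hasFDerivAt_sum_mul_sq_sub {E : Type*} [NormedAddCommGroup E] [NormedSpace ℝ E]
    (c a : ι → ℝ) (ℓ : ι → StrongDual ℝ E) (x : E) :
    HasFDerivAt (fun x => ∑ j, c j * (ℓ j x - a j) ^ 2)
      (∑ j, (2 * c j * (ℓ j x - a j)) • ℓ j) x := by
  refine HasFDerivAt.fun_sum fun j _ => ?_
  refine ((((ℓ j).hasFDerivAt.sub_const (a j)).pow 2).const_mul (c j)).congr_fderiv ?_
  rw [smul_smul]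
  congr 1
  ring

theorem sum_mul_sub_mul_eq_zero_of_fderiv_eq_zero {m : Type*} [Fintype m] [DecidableEq m]
    (c a : ι → ℝ) (g : ι → m → ℝ) {φ : m → ℝ}
    (hcrit : fderiv ℝ (fun φ => ∑ j, c j * (φ ⬝ᵥ g j - a j) ^ 2) φ = 0) (k : m) :
    ∑ j, c j * (φ ⬝ᵥ g j - a j) * g j k = 0 := by
  let ℓ j : StrongDual ℝ (m → ℝ) := LinearMap.toContinuousLinearMap (dotProductEquiv ℝ m (g j))
  have hℓ : ∀ j x, ℓ j x = x ⬝ᵥ g j := fun j x => dotProduct_comm _ _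
  have hderiv := (hasFDerivAt_sum_mul_sq_sub c a ℓ φ).fderiv
  simp only [hℓ] at hderiv
  have := congrArg (· (Pi.single k 1)) (hderiv.symm.trans hcrit)
  simpa only [mul_assoc, _root_.sum_apply, _root_.smul_apply, hℓ, single_dotProduct, one_mul,
    smul_eq_mul, ← Finset.mul_sum, _root_.zero_apply, mul_eq_zero, OfNat.ofNat_ne_zero,
    false_or] using this

end WeightedLeastSquares

section PartialDerivatives

variable {n : ℕ} {f : (Fin n → ℝ) → ℝ} {ϑ : Fin n → ℝ}

theorem pd_log (hf : DifferentiableAt ℝ f ϑ) (hf0 : f ϑ ≠ 0) (i : Fin n) :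
    pd i (fun x => Real.log (f x)) ϑ = pd i f ϑ / f ϑ := by
  simp only [pd, (hf.hasFDerivAt.log hf0).fderiv, _root_.smul_apply, smul_eq_mul]
  ring

theorem pd_one_sub_add_mul_const (hf : DifferentiableAt ℝ f ϑ) (p : ℝ) (i : Fin n) :
    pd i (fun x => 1 - f x + f x * p) ϑ = (p - 1) * pd i f ϑ := by
  have hderiv := ((hasFDerivAt_const (1 : ℝ) ϑ).fun_sub hf.hasFDerivAt).fun_add
    (hf.hasFDerivAt.mul_const p)
  simp only [pd, hderiv.fderiv, zero_sub, _root_.add_apply, _root_.neg_apply, _root_.smul_apply,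
    smul_eq_mul]
  ring

theorem continuation_ratio_mul_pd_log (hf : DifferentiableAt ℝ f ϑ) (hf0 : 0 < f ϑ)
    (hf1 : f ϑ < 1) {p : ℝ} (hp0 : 0 ≤ p) (hp1 : p < 1) (i : Fin n) :
    (1 - f ϑ + f ϑ * p) / (f ϑ * (1 - p)) * pd i (fun x => Real.log (1 - f x + f x * p)) ϑ
      = -pd i (fun x => Real.log (f x)) ϑ := by
  have hcont : 0 < 1 - f ϑ + f ϑ * p := by nlinarith
  have hdiff : DifferentiableAt ℝ (fun x => 1 - f x + f x * p) ϑ := by fun_prop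
  rw [pd_log hdiff hcont.ne', pd_one_sub_add_mul_const hf, pd_log hf hf0.ne']
  have : 1 - p ≠ 0 := by linarith
  field_simp
  ring

end PartialDerivatives

theorem mulVec_eq_of_normal_equations {ι m : Type*} [Fintype ι] [Fintype m]
    (μ L r : ι → ℝ) (C D : ι → m → ℝ) {φ : m → ℝ} (hratio : ∀ j k, L j * C j k = -D j k)
    (hnormal : ∀ k, ∑ j, μ j * L j * (φ ⬝ᵥ C j - r j) * C j k = 0) :
    (Matrix.of fun k i => -∑ j, μ j * D j k * C j i) *ᵥ φ = fun k => -∑ j, μ j * r j * D j k := by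
  funext k
  have hk : ∑ j, μ j * (φ ⬝ᵥ C j - r j) * D j k = 0 := by
    rw [← neg_eq_zero, ← hnormal k, ← Finset.sum_neg_distrib]
    refine Finset.sum_congr rfl fun j _ => ?_
    linear_combination -(μ j * (φ ⬝ᵥ C j - r j)) * hratio j k
  have hswap : ∑ i, (∑ j, μ j * D j k * C j i) * φ i = ∑ j, μ j * (φ ⬝ᵥ C j) * D j k := by
    simp only [dotProduct, Finset.sum_mul, Finset.mul_sum]
    rw [Finset.sum_comm]
    exact Finset.sum_congr rfl fun j _ => Finset.sum_congr rfl fun i _ => by ring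
  simp only [mul_sub, sub_mul, Finset.sum_sub_distrib] at hk
  simp only [mulVec, dotProduct, of_apply, neg_mul, Finset.sum_neg_distrib]
  rw [hswap]
  linear_combination -hk

theorem compatible_function_approximation_terminations_general
    {S O : Type*} [Fintype S] [Fintype O] {n : ℕ}
    (β : O → S → (Fin n → ℝ) → ℝ) (ϑ : Fin n → ℝ)
    (hβ0 : ∀ o s ϑ', 0 < β o s ϑ') (hβ1 : ∀ o s ϑ', β o s ϑ' < 1)
    (hβdiff : ∀ o s, ContDiff ℝ 1 (β o s))
    (πO : S → O → ℝ) (hπO0 : ∀ s o, 0 < πO s o) (hπO1 : ∀ s o, πO s o < 1)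
    (μ : S × O → ℝ)
    (qO : S → O → ℝ) (v : S → ℝ)
    (aO : S → O → ℝ) (haO : ∀ s' o, aO s' o = qO s' o - v s')
    (β' : O → S → (Fin n → ℝ) → ℝ)
    (hβ' : ∀ o s' ϑ', β' o s' ϑ' = 1 - β o s' ϑ' + β o s' ϑ' * πO s' o)
    (u : O → S → ℝ) (hu : ∀ o s', u o s' = (1 - β o s' ϑ) * qO s' o + β o s' ϑ * v s')
    (a' : S → O → ℝ) (ha' : ∀ s' o, a' s' o = u o s' - qO s' o)
    (L : S → O → ℝ) (hL : ∀ s' o, L s' o = β' o s' ϑ / (β o s' ϑ * (1 - πO s' o)))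
    (h : (Fin n → ℝ) → S → O → ℝ)
    (hh : ∀ φ s' o, h φ s' o = ∑ i, φ i * pd i (fun ϑ' => Real.log (β' o s' ϑ')) ϑ)
    (ε : (Fin n → ℝ) → ℝ)
    (hε : ∀ φ, ε φ = ∑ s', ∑ o, μ (s', o) * L s' o * (h φ s' o - a' s' o) ^ 2)
    (G : Matrix (Fin n) (Fin n) ℝ)
    (hG : ∀ i j, G i j = -∑ s', ∑ o, μ (s', o)
        * pd i (fun ϑ' => Real.log (β o s' ϑ')) ϑ
        * pd j (fun ϑ' => Real.log (β' o s' ϑ')) ϑ)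
    (w : Fin n → ℝ)
    (hw : ∀ i, w i = ∑ s', ∑ o, μ (s', o) * aO s' o * pd i (fun ϑ' => β o s' ϑ') ϑ)
    (φt : Fin n → ℝ) (hcrit : fderiv ℝ ε φt = 0) :
    G.mulVec φt = w ∧ (IsUnit G → -φt = G⁻¹.mulVec (-w)) := by
  set c : S × O → Fin n → ℝ := fun p i => pd i (fun ϑ' => Real.log (β' p.2 p.1 ϑ')) ϑ
  set d : S × O → Fin n → ℝ := fun p i => pd i (fun ϑ' => Real.log (β p.2 p.1 ϑ')) ϑ
  have hβdiffAt : ∀ o s, DifferentiableAt ℝ (β o s) ϑ := fun o s =>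
    (hβdiff o s).differentiable one_ne_zero ϑ
  have hratio : ∀ p k, L p.1 p.2 * c p k = -d p k := by
    rintro ⟨s', o⟩ k
    simp only [c, d, hL, hβ']
    exact continuation_ratio_mul_pd_log (hβdiffAt o s') (hβ0 o s' ϑ) (hβ1 o s' ϑ)
      (hπO0 s' o).le (hπO1 s' o) k
  have hε' : ε = fun φ => ∑ p : S × O, μ p * L p.1 p.2 * (φ ⬝ᵥ c p - a' p.1 p.2) ^ 2 := by
    funext φ
    rw [hε, ← Fintype.sum_prod_type']
    simp only [hh, dotProduct, c]
  have hG' : G = Matrix.of fun k i => -∑ p, μ p * d p k * c p i := by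
    ext k i
    rw [hG, ← Fintype.sum_prod_type']
    rfl
  have hw' : w = fun k => -∑ p, μ p * a' p.1 p.2 * d p k := by
    funext k
    rw [hw, ← Fintype.sum_prod_type', ← Finset.sum_neg_distrib]
    refine Finset.sum_congr rfl fun ⟨s', o⟩ _ => ?_
    have hβpos := hβ0 o s' ϑ
    simp only [d, pd_log (hβdiffAt o s') hβpos.ne', ha', hu, haO]
    field_simp
    ring
  have hmain : G *ᵥ φt = w := by
    rw [hG', hw']
    exact mulVec_eq_of_normal_equations μ (fun p => L p.1 p.2) _ c d hratio
      (sum_mul_sub_mul_eq_zero_of_fderiv_eq_zero _ _ c (hε' ▸ hcrit))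
  refine ⟨hmain, fun hunit => ?_⟩
  let := hunit.invertible
  exact (inv_mulVec_eq_vec (by rw [mulVec_neg, hmain])).symm

/-- Compatible function approximation for the state-option transition path manifold.
If `φ̃` is a critical point of the squared compatible-approximation error `ε`, then
`G_ϑ φ̃ = w`, where `w_i = ∑_{s',o} μ(s',o) a_O(s',o) ∂_i β(o,s',ϑ)`; in particular if
`G_ϑ` is invertible then `−φ̃ = G_ϑ⁻¹ (−w)`, the natural gradient with respect to the
termination parameters. -/
theorem compatible_function_approximation_terminations
    {S O : Type*} [Fintype S] [Fintype O] [Nonempty S] [Nonempty O] {n : ℕ}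
    (β : O → S → (Fin n → ℝ) → ℝ) (ϑ : Fin n → ℝ)
    (hβ0 : ∀ o s ϑ', 0 < β o s ϑ') (hβ1 : ∀ o s ϑ', β o s ϑ' < 1)
    (hβdiff : ∀ o s, ContDiff ℝ 1 (β o s))
    (πO : S → O → ℝ) (hπO0 : ∀ s o, 0 < πO s o) (hπO1 : ∀ s o, πO s o < 1)
    (hπOsum : ∀ s, ∑ o, πO s o = 1)
    (μ : S × O → ℝ) (hμ : ∀ p, 0 ≤ μ p)
    (qO : S → O → ℝ) (v : S → ℝ)
    (aO : S → O → ℝ) (haO : ∀ s' o, aO s' o = qO s' o - v s')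
    (β' : O → S → (Fin n → ℝ) → ℝ)
    (hβ' : ∀ o s' ϑ', β' o s' ϑ' = 1 - β o s' ϑ' + β o s' ϑ' * πO s' o)
    (u : O → S → ℝ) (hu : ∀ o s', u o s' = (1 - β o s' ϑ) * qO s' o + β o s' ϑ * v s')
    (a' : S → O → ℝ) (ha' : ∀ s' o, a' s' o = u o s' - qO s' o)
    (L : S → O → ℝ) (hL : ∀ s' o, L s' o = β' o s' ϑ / (β o s' ϑ * (1 - πO s' o)))
    (h : (Fin n → ℝ) → S → O → ℝ)
    (hh : ∀ φ s' o, h φ s' o = ∑ i, φ i * pd i (fun ϑ' => Real.log (β' o s' ϑ')) ϑ)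
    (ε : (Fin n → ℝ) → ℝ)
    (hε : ∀ φ, ε φ = ∑ s', ∑ o, μ (s', o) * L s' o * (h φ s' o - a' s' o) ^ 2)
    (G : Matrix (Fin n) (Fin n) ℝ)
    (hG : ∀ i j, G i j = -∑ s', ∑ o, μ (s', o)
        * pd i (fun ϑ' => Real.log (β o s' ϑ')) ϑ
        * pd j (fun ϑ' => Real.log (β' o s' ϑ')) ϑ)
    (w : Fin n → ℝ)
    (hw : ∀ i, w i = ∑ s', ∑ o, μ (s', o) * aO s' o * pd i (fun ϑ' => β o s' ϑ') ϑ)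
    (φt : Fin n → ℝ) (hcrit : fderiv ℝ ε φt = 0) :
    G.mulVec φt = w ∧ (IsUnit G → -φt = G⁻¹.mulVec (-w)) :=
  compatible_function_approximation_terminations_general β ϑ hβ0 hβ1 hβdiff πO hπO0 hπO1 μ qO v aO
    haO β' hβ' u hu a' ha' L hL h hh ε hε G hG w hw φt hcrit
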